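/- arXiv:1508.04216 — 2 statements merged into one kernel-verified Lean document; each statement's English description precedes it below -/
import Mathlib

section
/- Let 0 < p < 1. There exists a constant K_p > 0, depending only on p, such that for every real a ≠ 0 and every real b one has | |a+b|^p − |a|^p − p·sign(a)·|a|^{p−1}·b | ≤ K_p · |a|^{p−2} · b². -/
/-!
Dividing by `|a|^p` and writing `t = b / a` reduces the claim to
`|(|1 + t|)^p - 1 - p t| ≤ K t²`. For `x = 1 + t ≥ 1/2`, the tangent lines of the concave
function `x^p` at `1` and at `x` give
`0 ≤ 1 + p (x - 1) - x^p ≤ p x^(p-1) (x - 1) (x^(1-p) - 1)`, and `|x^(1-p) - 1| ≤ |x - 1|`.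
For `t < -1/2` both sides are of size `|t|`, which is dominated by `t²`.
-/

open Real

section Concavity

variable {p x : ℝ}

theorem rpow_le_one_add_mul_sub_one (hx : 0 ≤ x) (hp0 : 0 ≤ p) (hp1 : p ≤ 1) :
    x ^ p ≤ 1 + p * (x - 1) := by
  simpa using rpow_one_add_le_one_add_mul_self (s := x - 1) (by linarith) hp0 hp1

theorem one_le_rpow_add_mul_rpow_sub_one (hx : 0 < x) (hp0 : 0 ≤ p) (hp1 : p ≤ 1) :
    1 ≤ x ^ p + p * x ^ (p - 1) * (1 - x) := by
  have tangent := rpow_le_one_add_mul_sub_one (inv_nonneg.2 hx.le) hp0 hp1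
  have hxp : 0 < x ^ p := rpow_pos_of_pos hx p
  rw [inv_rpow hx.le, inv_le_iff_one_le_mul₀ hxp] at tangent
  rw [rpow_sub_one hx.ne']
  calc 1 ≤ (1 + p * (x⁻¹ - 1)) * x ^ p := tangent
    _ = x ^ p + p * (x ^ p / x) * (1 - x) := by field_simp

theorem abs_rpow_sub_one_le_abs_sub_one (hx : 0 ≤ x) (hp0 : 0 ≤ p) (hp1 : p ≤ 1) :
    |x ^ p - 1| ≤ |x - 1| := by
  rcases le_total x 1 with hx1 | hx1
  · have h_lower : x ≤ x ^ p := self_le_rpow_of_le_one hx hx1 hp1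
    have h_upper : x ^ p ≤ 1 := rpow_le_one hx hx1 hp0
    rw [abs_of_nonpos (by linarith), abs_of_nonpos (by linarith)]
    linarith
  · have h_lower : 1 ≤ x ^ p := one_le_rpow hx1 hp0
    have h_upper : x ^ p ≤ x := rpow_le_self_of_one_le hx1 hp1
    rw [abs_of_nonneg (by linarith), abs_of_nonneg (by linarith)]
    linarith

theorem abs_rpow_sub_one_sub_mul_le (hx : 0 < x) (hp0 : 0 ≤ p) (hp1 : p ≤ 1) :
    |x ^ p - 1 - p * (x - 1)| ≤ p * x ^ (p - 1) * (x - 1) ^ 2 := by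
  have tangent_at_one := rpow_le_one_add_mul_sub_one hx.le hp0 hp1
  have tangent_at_x := one_le_rpow_add_mul_rpow_sub_one hx hp0 hp1
  have hx' : 0 ≤ x ^ (p - 1) := rpow_nonneg hx.le _
  have h_inv : x ^ (p - 1) * x ^ (1 - p) = 1 := by
    rw [← rpow_add hx]; simp
  have h_gap : |x ^ (1 - p) - 1| ≤ |x - 1| :=
    abs_rpow_sub_one_le_abs_sub_one hx.le (by linarith) (by linarith)
  have h_prod : (x - 1) * (x ^ (1 - p) - 1) ≤ (x - 1) ^ 2 := by
    calc (x - 1) * (x ^ (1 - p) - 1) ≤ |x - 1| * |x ^ (1 - p) - 1| := by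
          rw [← abs_mul]; exact le_abs_self _
      _ ≤ |x - 1| * |x - 1| := by gcongr
      _ = (x - 1) ^ 2 := by rw [← abs_mul, abs_mul_self, sq]
  rw [abs_of_nonpos (by linarith)]
  calc -(x ^ p - 1 - p * (x - 1)) ≤ p * x ^ (p - 1) * ((x - 1) * (x ^ (1 - p) - 1)) := by
        linear_combination tangent_at_x - p * (x - 1) * h_inv
    _ ≤ p * x ^ (p - 1) * (x - 1) ^ 2 := by gcongr

end Concavity

section OneVariable

variable {p t : ℝ}

theorem abs_one_add_rpow_sub_le_of_neg_half_le (hp0 : 0 ≤ p) (hp1 : p ≤ 1)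
    (ht : -(1 / 2) ≤ t) :
    |(1 + t) ^ p - 1 - p * t| ≤ 2 * t ^ 2 := by
  have hx : 0 < 1 + t := by linarith
  have h_pow : (1 + t) ^ (p - 1) ≤ 2 := by
    calc (1 + t) ^ (p - 1) ≤ (1 / 2 : ℝ) ^ (p - 1) :=
          rpow_le_rpow_of_nonpos (by norm_num) (by linarith) (by linarith)
      _ ≤ (1 / 2 : ℝ) ^ (-1 : ℝ) :=
          rpow_le_rpow_of_exponent_ge (by norm_num) (by norm_num) (by linarith)
      _ = 2 := by norm_num [rpow_neg_one]
  have h := abs_rpow_sub_one_sub_mul_le hx hp0 hp1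
  simp only [add_sub_cancel_left] at h
  calc |(1 + t) ^ p - 1 - p * t| ≤ p * (1 + t) ^ (p - 1) * t ^ 2 := h
    _ ≤ 1 * 2 * t ^ 2 := by gcongr
    _ = 2 * t ^ 2 := by ring

theorem abs_abs_one_add_rpow_sub_le_of_lt_neg_half (hp0 : 0 ≤ p) (hp1 : p ≤ 1)
    (ht : t < -(1 / 2)) :
    |(|1 + t|) ^ p - 1 - p * t| ≤ 4 * t ^ 2 := by
  have h_upper := rpow_le_one_add_mul_sub_one (abs_nonneg (1 + t)) hp0 hp1
  have h_nonneg : 0 ≤ (|1 + t|) ^ p := rpow_nonneg (abs_nonneg _) p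
  have h_tri : |1 + t| ≤ 1 - t := abs_le.2 ⟨by linarith, by linarith⟩
  rw [abs_le]
  constructor <;> nlinarith

theorem abs_abs_one_add_rpow_sub_le (hp0 : 0 ≤ p) (hp1 : p ≤ 1) (t : ℝ) :
    |(|1 + t|) ^ p - 1 - p * t| ≤ 4 * t ^ 2 := by
  rcases le_or_gt (-(1 / 2)) t with ht | ht
  · rw [abs_of_pos (by linarith : 0 < 1 + t)]
    linarith [abs_one_add_rpow_sub_le_of_neg_half_le hp0 hp1 ht, sq_nonneg t]
  · exact abs_abs_one_add_rpow_sub_le_of_lt_neg_half hp0 hp1 ht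

end OneVariable

section Scaling

variable {p a b : ℝ}

theorem abs_add_rpow_sub_eq_mul (ha : a ≠ 0) :
    (|a + b|) ^ p - (|a|) ^ p - p * Real.sign a * (|a|) ^ (p - 1) * b
      = (|a|) ^ p * ((|1 + b / a|) ^ p - 1 - p * (b / a)) := by
  have h_abs : |a| ≠ 0 := abs_ne_zero.2 ha
  have h_sign : Real.sign a / |a| = a⁻¹ := by
    rcases ha.lt_or_gt with h | h
    · rw [sign_of_neg h, abs_of_neg h, neg_div, one_div, inv_neg, neg_neg]
    · rw [sign_of_pos h, abs_of_pos h, one_div]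
  have h_split : a + b = a * (1 + b / a) := by field_simp
  have h_linear : p * Real.sign a * ((|a|) ^ p / |a|) * b = (|a|) ^ p * (p * (b / a)) := by
    calc p * Real.sign a * ((|a|) ^ p / |a|) * b = (|a|) ^ p * p * (Real.sign a / |a|) * b := by
          ring
      _ = (|a|) ^ p * (p * (b / a)) := by rw [h_sign]; ring
  rw [h_split, abs_mul, mul_rpow (abs_nonneg _) (abs_nonneg _), rpow_sub_one h_abs, h_linear]
  ring

theorem abs_rpow_sub_two_mul_sq (ha : a ≠ 0) :
    (|a|) ^ (p - 2) * b ^ 2 = (|a|) ^ p * (b / a) ^ 2 := by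
  rw [rpow_sub (abs_pos.2 ha), rpow_two, sq_abs]
  field_simp

end Scaling

/-- Second-order expansion bound for `x ↦ |x|^p`, `0 < p < 1`:
there is a constant `K_p > 0` depending only on `p` such that for all `a ≠ 0` and all `b`,
`| |a+b|^p − |a|^p − p·sign(a)·|a|^{p−1}·b | ≤ K_p · |a|^{p−2} · b²`. -/
theorem abs_rpow_second_order_bound (p : ℝ) (hp0 : 0 < p) (hp1 : p < 1) :
    ∃ K : ℝ, 0 < K ∧ ∀ a b : ℝ, a ≠ 0 →
      |(|a + b|) ^ p - (|a|) ^ p - p * Real.sign a * (|a|) ^ (p - 1) * b|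
        ≤ K * (|a|) ^ (p - 2) * b ^ 2 := by
  refine ⟨4, by norm_num, fun a b ha => ?_⟩
  have h_scale : 0 ≤ (|a|) ^ p := rpow_nonneg (abs_nonneg a) p
  rw [abs_add_rpow_sub_eq_mul ha, mul_assoc, abs_rpow_sub_two_mul_sq ha, abs_mul,
    abs_of_nonneg h_scale, mul_left_comm]
  gcongr
  exact abs_abs_one_add_rpow_sub_le hp0.le hp1.le (b / a)
end

section
/- Let (X_i)_{i≥1} be an i.i.d. sequence of real random variables on a probability space, and let 0 ≤ a < b be real numbers. Then almost surely, sup_{u ∈ [a,b]} | (1/n) Σ_{i=1}^n cos(u·X_i) − E[cos(u·X_1)] | → 0 as n → ∞. -/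
open MeasureTheory ProbabilityTheory Filter Real Set Finset Topology

/-! Truncating at level `M` gives `|cos (u x) - cos (v x)| ≤ |u - v| M + 2 𝟙{M < |x|}`.
Averaged over the sample, together with the strong law for the tail indicators, this makes the
empirical characteristic functions asymptotically uniformly equicontinuous; integrated, it makes
the limit uniformly continuous. The strong law at the countably many rational points then
upgrades to uniform convergence on the compact `[a, b]`. -/

theorem tendsto_iSup_abs_sub_of_denseRange {ι α κ : Type*} [PseudoMetricSpace α]
    {l : Filter ι} {f : ι → α → ℝ} {g : α → ℝ} {s : Set α} (hs : IsCompact s)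
    {φ : κ → α} (hφ : DenseRange φ)
    (hlim : ∀ k, Tendsto (fun i => f i (φ k)) l (𝓝 (g (φ k))))
    (hf : ∀ ε > 0, ∃ δ > 0, ∀ᶠ i in l, ∀ u v, dist u v < δ → dist (f i u) (f i v) < ε)
    (hg : UniformContinuous g) :
    Tendsto (fun i => ⨆ u ∈ s, |f i u - g u|) l (𝓝 0) := by
  have hnonneg : ∀ i, 0 ≤ ⨆ u ∈ s, |f i u - g u| := fun i =>
    Real.iSup_nonneg fun u => Real.iSup_nonneg fun _ => abs_nonneg _
  refine tendsto_order.2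
    ⟨fun c hc => Eventually.of_forall fun i => hc.trans_le (hnonneg i), fun ε hε => ?_⟩
  obtain ⟨δ₁, hδ₁, hfδ⟩ := hf (ε / 4) (by positivity)
  obtain ⟨δ₂, hδ₂, hgδ⟩ := Metric.uniformContinuous_iff.1 hg (ε / 4) (by positivity)
  obtain ⟨t, hst⟩ := hs.elim_finite_subcover (fun k => Metric.ball (φ k) (min δ₁ δ₂))
    (fun _ => Metric.isOpen_ball)
    fun u _ => Set.mem_iUnion.2 (hφ.exists_dist_lt u (lt_min hδ₁ hδ₂))
  have hnet : ∀ᶠ i in l, ∀ k ∈ t, dist (f i (φ k)) (g (φ k)) < ε / 4 :=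
    (eventually_all_finset t).2 fun k _ => Metric.tendsto_nhds.1 (hlim k) _ (by positivity)
  filter_upwards [hfδ, hnet] with i hfi hneti
  refine lt_of_le_of_lt (Real.iSup_le (fun u => Real.iSup_le (fun hu => ?_) ?_) ?_)
    (by linarith : 3 * (ε / 4) < ε)
  · obtain ⟨k, hk, huk⟩ := Set.mem_iUnion₂.1 (hst hu)
    have huk : dist u (φ k) < min δ₁ δ₂ := huk
    rw [← Real.dist_eq]
    calc dist (f i u) (g u)
        ≤ dist (f i u) (f i (φ k)) + dist (f i (φ k)) (g (φ k)) + dist (g (φ k)) (g u) :=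
          dist_triangle4 _ _ _ _
      _ ≤ ε / 4 + ε / 4 + ε / 4 := by
          gcongr
          · exact (hfi _ _ (huk.trans_le (min_le_left _ _))).le
          · exact (hneti k hk).le
          · exact (hgδ (by rw [dist_comm]; exact huk.trans_le (min_le_right _ _))).le
      _ = 3 * (ε / 4) := by ring
  all_goals positivity

lemma exists_eventually_dist_lt_of_abs_sub_le_tail {ι : Type*} {l : Filter ι}
    {F : ι → ℝ → ℝ} {T : ι → ℕ → ℝ} {τ : ℕ → ℝ}
    (hF : ∀ i u v (M : ℕ), |F i u - F i v| ≤ |u - v| * M + 2 * T i M)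
    (hT : ∀ M, Tendsto (fun i => T i M) l (𝓝 (τ M))) (hτ : Tendsto τ atTop (𝓝 0)) :
    ∀ ε > 0, ∃ δ > 0, ∀ᶠ i in l, ∀ u v, dist u v < δ → dist (F i u) (F i v) < ε := by
  intro ε hε
  obtain ⟨M, hM⟩ := (hτ.eventually (gt_mem_nhds (by positivity : (0 : ℝ) < ε / 4))).exists
  have hM₀ : (0 : ℝ) ≤ M := M.cast_nonneg
  refine ⟨ε / (2 * (M + 1)), by positivity, ?_⟩
  filter_upwards [(hT M).eventually (gt_mem_nhds hM)] with i hi u v huv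
  have hmod : |u - v| * M ≤ ε / 2 := by
    calc |u - v| * M ≤ ε / (2 * (M + 1)) * (M + 1) := by
          rw [← Real.dist_eq]; gcongr; linarith
      _ = ε / 2 := by field_simp
  rw [Real.dist_eq]
  linarith [hF i u v M]

lemma measurable_cos_mul (u : ℝ) : Measurable fun x : ℝ => cos (u * x) := by fun_prop

noncomputable def tailIndicator (M x : ℝ) : ℝ := (Ioi M).indicator 1 |x|

lemma tailIndicator_of_abs_le {M x : ℝ} (hx : |x| ≤ M) : tailIndicator M x = 0 :=
  Set.indicator_of_notMem (not_lt.2 hx) _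

lemma tailIndicator_of_lt_abs {M x : ℝ} (hx : M < |x|) : tailIndicator M x = 1 :=
  Set.indicator_of_mem (s := Ioi M) hx _

lemma abs_tailIndicator_le_one (M x : ℝ) : |tailIndicator M x| ≤ 1 := by
  rcases le_or_gt |x| M with hx | hx
  · simp [tailIndicator_of_abs_le hx]
  · simp [tailIndicator_of_lt_abs hx]

lemma measurable_tailIndicator (M : ℝ) : Measurable (tailIndicator M) :=
  (measurable_one.indicator measurableSet_Ioi).comp measurable_abs

lemma abs_cos_mul_sub_cos_mul_le {M : ℝ} (hM : 0 ≤ M) (u v x : ℝ) :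
    |cos (u * x) - cos (v * x)| ≤ |u - v| * M + 2 * tailIndicator M x := by
  rcases le_or_gt |x| M with hx | hx
  · rw [tailIndicator_of_abs_le hx, mul_zero, add_zero]
    calc |cos (u * x) - cos (v * x)| ≤ |u * x - v * x| := abs_cos_sub_cos_le _ _
      _ = |u - v| * |x| := by rw [← sub_mul, abs_mul]
      _ ≤ |u - v| * M := mul_le_mul_of_nonneg_left hx (abs_nonneg _)
  · rw [tailIndicator_of_lt_abs hx, mul_one]
    linarith [abs_sub (cos (u * x)) (cos (v * x)), abs_cos_le_one (u * x),
      abs_cos_le_one (v * x), mul_nonneg (abs_nonneg (u - v)) hM]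

lemma abs_avg_cos_mul_sub_avg_cos_mul_le {M : ℝ} (hM : 0 ≤ M) (x : ℕ → ℝ) (n : ℕ) (u v : ℝ) :
    |(∑ i ∈ range n, cos (u * x i)) / n - (∑ i ∈ range n, cos (v * x i)) / n|
      ≤ |u - v| * M + 2 * ((∑ i ∈ range n, tailIndicator M (x i)) / n) := by
  rcases n.eq_zero_or_pos with rfl | hn
  · simpa using mul_nonneg (abs_nonneg (u - v)) hM
  have hn : (0 : ℝ) < n := by exact_mod_cast hn
  rw [← sub_div, ← sum_sub_distrib, abs_div, abs_of_pos hn, div_le_iff₀ hn]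
  calc |∑ i ∈ range n, (cos (u * x i) - cos (v * x i))|
      ≤ ∑ i ∈ range n, |cos (u * x i) - cos (v * x i)| := abs_sum_le_sum_abs _ _
    _ ≤ ∑ i ∈ range n, (|u - v| * M + 2 * tailIndicator M (x i)) :=
        sum_le_sum fun i _ => abs_cos_mul_sub_cos_mul_le hM u v (x i)
    _ = (|u - v| * M + 2 * ((∑ i ∈ range n, tailIndicator M (x i)) / n)) * n := by
        rw [sum_add_distrib, sum_const, card_range, nsmul_eq_mul, ← mul_sum]
        field_simp

section Integral

variable {Ω : Type*} [MeasurableSpace Ω] {μ : Measure Ω} {Y : Ω → ℝ}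

lemma integrable_comp_of_abs_le [IsFiniteMeasure μ] {h : ℝ → ℝ} (hh : Measurable h) {C : ℝ}
    (hC : ∀ x, |h x| ≤ C) (hY : AEMeasurable Y μ) : Integrable (fun ω => h (Y ω)) μ :=
  Integrable.of_bound (hh.comp_aemeasurable hY).aestronglyMeasurable C
    (Eventually.of_forall fun ω => hC (Y ω))

lemma integrable_cos_mul [IsFiniteMeasure μ] (hY : AEMeasurable Y μ) (u : ℝ) :
    Integrable (fun ω => cos (u * Y ω)) μ :=
  integrable_comp_of_abs_le (h := fun x => cos (u * x)) (measurable_cos_mul u)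
    (fun _ => abs_cos_le_one _) hY

lemma integrable_tailIndicator [IsFiniteMeasure μ] (hY : AEMeasurable Y μ) (M : ℝ) :
    Integrable (fun ω => tailIndicator M (Y ω)) μ :=
  integrable_comp_of_abs_le (measurable_tailIndicator M) (abs_tailIndicator_le_one M) hY

lemma tendsto_integral_tailIndicator [IsFiniteMeasure μ] (hY : AEMeasurable Y μ) :
    Tendsto (fun M : ℕ => ∫ ω, tailIndicator M (Y ω) ∂μ) atTop (𝓝 0) := by
  have hpt : ∀ ω, Tendsto (fun M : ℕ => tailIndicator M (Y ω)) atTop (𝓝 0) :=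
    fun ω => tendsto_const_nhds.congr' <|
      (tendsto_natCast_atTop_atTop.eventually_ge_atTop |Y ω|).mono fun M hM =>
        (tailIndicator_of_abs_le hM).symm
  simpa only [integral_zero] using tendsto_integral_of_dominated_convergence
    (fun _ => (1 : ℝ)) (fun M => (integrable_tailIndicator hY M).aestronglyMeasurable)
    (integrable_const 1)
    (fun M => Eventually.of_forall fun ω => abs_tailIndicator_le_one M (Y ω))
    (Eventually.of_forall hpt)

lemma abs_integral_cos_mul_sub_integral_cos_mul_le [IsProbabilityMeasure μ]
    (hY : AEMeasurable Y μ) {M : ℝ} (hM : 0 ≤ M) (u v : ℝ) :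
    |∫ ω, cos (u * Y ω) ∂μ - ∫ ω, cos (v * Y ω) ∂μ|
      ≤ |u - v| * M + 2 * ∫ ω, tailIndicator M (Y ω) ∂μ := by
  have hind := integrable_tailIndicator hY M
  rw [← integral_sub (integrable_cos_mul hY u) (integrable_cos_mul hY v)]
  calc |∫ ω, (cos (u * Y ω) - cos (v * Y ω)) ∂μ|
      ≤ ∫ ω, |cos (u * Y ω) - cos (v * Y ω)| ∂μ := abs_integral_le_integral_abs
    _ ≤ ∫ ω, (|u - v| * M + 2 * tailIndicator M (Y ω)) ∂μ :=
        integral_mono ((integrable_cos_mul hY u).sub (integrable_cos_mul hY v)).abs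
          ((integrable_const _).add (hind.const_mul 2))
          fun ω => abs_cos_mul_sub_cos_mul_le hM u v (Y ω)
    _ = |u - v| * M + 2 * ∫ ω, tailIndicator M (Y ω) ∂μ := by
        rw [integral_add (integrable_const _) (hind.const_mul 2), integral_const,
          integral_const_mul, probReal_univ, one_smul]

lemma uniformContinuous_integral_cos_mul [IsProbabilityMeasure μ] (hY : AEMeasurable Y μ) :
    UniformContinuous fun u => ∫ ω, cos (u * Y ω) ∂μ := by
  refine Metric.uniformContinuous_iff.2 fun ε hε => ?_
  obtain ⟨δ, hδ, h⟩ := exists_eventually_dist_lt_of_abs_sub_le_tail (l := (⊤ : Filter Unit))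
    (F := fun _ u => ∫ ω, cos (u * Y ω) ∂μ)
    (fun _ u v M => abs_integral_cos_mul_sub_integral_cos_mul_le hY M.cast_nonneg u v)
    (fun _ => tendsto_const_nhds) (tendsto_integral_tailIndicator hY) ε hε
  exact ⟨δ, hδ, fun {u v} huv => eventually_top.1 h () u v huv⟩

end Integral

lemma ae_tendsto_avg_comp {Ω E : Type*} [MeasurableSpace Ω] [MeasurableSpace E]
    {μ : Measure Ω} {X : ℕ → Ω → E} (hindep : Pairwise fun i j => IndepFun (X i) (X j) μ)
    (hident : ∀ i, IdentDistrib (X i) (X 0) μ μ) {h : E → ℝ} (hh : Measurable h)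
    (hint : Integrable (fun ω => h (X 0 ω)) μ) :
    ∀ᵐ ω ∂μ, Tendsto (fun n : ℕ => (∑ i ∈ range n, h (X i ω)) / n) atTop
      (𝓝 (∫ ω, h (X 0 ω) ∂μ)) :=
  strong_law_ae_real (fun i ω => h (X i ω)) hint (fun _ _ hij => (hindep hij).comp hh hh)
    fun i => (hident i).comp hh

theorem empirical_char_fun_unif_lln_general {Ω : Type*} [MeasurableSpace Ω]
    (μ : Measure Ω) [IsProbabilityMeasure μ] (X : ℕ → Ω → ℝ)
    (hindep : iIndepFun X μ)
    (hident : ∀ i, IdentDistrib (X i) (X 0) μ μ)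
    (a b : ℝ) :
    ∀ᵐ ω ∂μ, Tendsto
      (fun n : ℕ => ⨆ u ∈ Set.Icc a b,
        |(∑ i ∈ Finset.range n, Real.cos (u * X i ω)) / n
          - ∫ ω', Real.cos (u * X 0 ω') ∂μ|)
      atTop (nhds 0) := by
  have hpair : Pairwise fun i j => IndepFun (X i) (X j) μ := fun _ _ hij => hindep.indepFun hij
  have hX₀ : AEMeasurable (X 0) μ := (hident 0).aemeasurable_snd
  have hcos : ∀ᵐ ω ∂μ, ∀ q : ℚ,
      Tendsto (fun n : ℕ => (∑ i ∈ range n, cos (q * X i ω)) / n)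
        atTop (𝓝 (∫ ω', cos (q * X 0 ω') ∂μ)) :=
    ae_all_iff.2 fun q => (ae_tendsto_avg_comp hpair hident (measurable_cos_mul q)
      (integrable_cos_mul hX₀ q) :)
  have htail : ∀ᵐ ω ∂μ, ∀ M : ℕ,
      Tendsto (fun n : ℕ => (∑ i ∈ range n, tailIndicator M (X i ω)) / n)
        atTop (𝓝 (∫ ω', tailIndicator M (X 0 ω') ∂μ)) :=
    ae_all_iff.2 fun M => (ae_tendsto_avg_comp hpair hident (measurable_tailIndicator M)
      (integrable_tailIndicator hX₀ M) :)
  filter_upwards [hcos, htail] with ω hcosω htailω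
  exact tendsto_iSup_abs_sub_of_denseRange isCompact_Icc Rat.denseRange_cast hcosω
    (exists_eventually_dist_lt_of_abs_sub_le_tail
      (fun n u v M => abs_avg_cos_mul_sub_avg_cos_mul_le M.cast_nonneg (X · ω) n u v) htailω
      (tendsto_integral_tailIndicator hX₀))
    (uniformContinuous_integral_cos_mul hX₀)

/-- Locally uniform strong law of large numbers for the (real part of the) empirical
characteristic function of an i.i.d. sequence: almost surely,
`sup_{u ∈ [a,b]} |(1/n) Σ_{i<n} cos(u·X_i) − E[cos(u·X_0)]| → 0`. -/
theorem empirical_char_fun_unif_lln {Ω : Type*} [MeasurableSpace Ω]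
    (μ : Measure Ω) [IsProbabilityMeasure μ] (X : ℕ → Ω → ℝ)
    (hmeas : ∀ i, Measurable (X i))
    (hindep : iIndepFun X μ)
    (hident : ∀ i, IdentDistrib (X i) (X 0) μ μ)
    (a b : ℝ) (ha : 0 ≤ a) (hab : a < b) :
    ∀ᵐ ω ∂μ, Tendsto
      (fun n : ℕ => ⨆ u ∈ Set.Icc a b,
        |(∑ i ∈ Finset.range n, Real.cos (u * X i ω)) / n
          - ∫ ω', Real.cos (u * X 0 ω') ∂μ|)
      atTop (nhds 0) :=
  empirical_char_fun_unif_lln_general μ X hindep hident a b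
end
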